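/- arXiv:0810.5520 — 2 statements merged into one kernel-verified Lean document; each statement's English description precedes it below -/
import Mathlib

section
/- Let G be a finite cyclic group and χ a rational-valued class function on G that is constant on elements generating the same subgroup (so χ(H) := χ(h) for any generator h of H is well-defined). Define F_χ(H) = Σ_{H ≤ K ≤ G} μ(H,K) χ(K), where μ is the Möbius function of the subgroup lattice of G. Then χ = Σ_{H ≤ G} (F_χ(H)/[G:H]) · Ind_H^G(1). -/
open scoped Classical in
/-- Möbius inversion expression of a rational class function on a finite cyclic group as a
combination of transitive permutation characters. Here `μ` is the Möbius function of the
subgroup lattice (characterized by its defining recursion), `χS` is the common value of `χ`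
on generators of a subgroup, and `F` is the Möbius transform of `χS`. -/
theorem char_eq_sum_ind (G : Type*) [CommGroup G] [Fintype G] [IsCyclic G]
    (μ : Subgroup G → Subgroup G → ℤ)
    (hμ : ∀ H K : Subgroup G, H ≤ K →
      (∑ J ∈ Finset.univ.filter (fun J => H ≤ J ∧ J ≤ K), μ H J) = if H = K then 1 else 0)
    (hμ' : ∀ H K : Subgroup G, ¬ H ≤ K → μ H K = 0)
    (χ : G → ℚ) (χS : Subgroup G → ℚ)
    (hχ : ∀ g : G, χS (Subgroup.zpowers g) = χ g)
    (F : Subgroup G → ℚ)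
    (hF : ∀ H : Subgroup G,
      F H = ∑ K ∈ Finset.univ.filter (fun K => H ≤ K), (μ H K : ℚ) * χS K)
    (g : G) :
    χ g = ∑ H : Subgroup G, F H / (H.index : ℚ) * (if g ∈ H then (H.index : ℚ) else 0) := by
  classical
  letI : LocallyFiniteOrder (Subgroup G) := Fintype.toLocallyFiniteOrder
  set Z := Subgroup.zpowers g with hZ
  -- Step 1: `μ` coincides with mathlib's Möbius function of the subgroup lattice.
  have key : ∀ K H : Subgroup G, (μ H K : ℚ) = IncidenceAlgebra.mu ℚ H K := by
    intro K
    induction K using WellFoundedLT.induction with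
    | _ K ih =>
      intro H
      by_cases hHK : H ≤ K
      · have h1 := hμ H K hHK
        have hIcc : Finset.univ.filter (fun J => H ≤ J ∧ J ≤ K) = Finset.Icc H K := by
          ext J; simp [Finset.mem_Icc]
        rw [hIcc, Finset.Icc_eq_cons_Ico hHK, Finset.sum_cons] at h1
        have h1' : (μ H K : ℚ) + ∑ J ∈ Finset.Ico H K, (μ H J : ℚ)
            = if H = K then 1 else 0 := by
          have := congrArg (Int.cast : ℤ → ℚ) h1
          push_cast at this
          simpa using this
        have h2 : ∑ J ∈ Finset.Ico H K, (μ H J : ℚ)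
            = ∑ J ∈ Finset.Ico H K, IncidenceAlgebra.mu ℚ H J :=
          Finset.sum_congr rfl fun J hJ => ih J (Finset.mem_Ico.1 hJ).2 H
        have h3 : IncidenceAlgebra.mu ℚ H K
            = (if H = K then 1 else 0) - ∑ J ∈ Finset.Ico H K, IncidenceAlgebra.mu ℚ H J := by
          rw [IncidenceAlgebra.mu_apply]
          split_ifs with h
          · subst h; simp
          · ring
        rw [h2] at h1'
        rw [h3]
        linarith
      · rw [hμ' H K hHK, IncidenceAlgebra.apply_eq_zero_of_not_le hHK]
        simp
  -- Step 2: simplify each summand on the RHS.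
  have hidx : ∀ H : Subgroup G, (H.index : ℚ) ≠ 0 := fun H =>
    Nat.cast_ne_zero.2 Subgroup.index_ne_zero_of_finite
  have hterm : ∀ H : Subgroup G,
      F H / (H.index : ℚ) * (if g ∈ H then (H.index : ℚ) else 0)
        = if Z ≤ H then F H else 0 := by
    intro H
    rw [show (Z ≤ H) = (g ∈ H) from propext (Subgroup.zpowers_le)]
    split_ifs with h
    · exact div_mul_cancel₀ _ (hidx H)
    · simp
  -- Step 3: remove the filter in the definition of `F`.
  have hF' : ∀ H : Subgroup G, F H = ∑ K : Subgroup G, (μ H K : ℚ) * χS K := by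
    intro H
    rw [hF H, Finset.sum_filter]
    refine Finset.sum_congr rfl fun K _ => ?_
    split_ifs with h
    · rfl
    · rw [hμ' H K h]; simp
  -- Step 4: compute.
  have inner : ∀ K : Subgroup G,
      (∑ H : Subgroup G, (if Z ≤ H then (1 : ℚ) else 0) * (μ H K : ℚ))
        = if Z = K then 1 else 0 := by
    intro K
    have step : (∑ H : Subgroup G, (if Z ≤ H then (1 : ℚ) else 0) * (μ H K : ℚ))
        = ∑ H ∈ Finset.Icc Z K, IncidenceAlgebra.mu ℚ H K := by
      rw [show (Finset.Icc Z K : Finset (Subgroup G))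
          = Finset.univ.filter (fun H => Z ≤ H ∧ H ≤ K) by ext J; simp [Finset.mem_Icc],
        Finset.sum_filter]
      refine Finset.sum_congr rfl fun H _ => ?_
      by_cases h1 : Z ≤ H
      · by_cases h2 : H ≤ K
        · simp [h1, h2, key K H]
        · simp [h1, h2, hμ' H K h2]
      · simp [h1]
    rw [step, IncidenceAlgebra.sum_Icc_mu_left]
  calc χ g = χS Z := (hχ g).symm
    _ = ∑ K : Subgroup G, (if Z = K then (1 : ℚ) else 0) * χS K := by
        simp_rw [ite_mul, one_mul, zero_mul]
        rw [Finset.sum_ite_eq Finset.univ Z χS, if_pos (Finset.mem_univ Z)]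
    _ = ∑ K : Subgroup G, (∑ H : Subgroup G, (if Z ≤ H then (1 : ℚ) else 0) * (μ H K : ℚ)) * χS K := by
        simp_rw [inner]
    _ = ∑ H : Subgroup G, ∑ K : Subgroup G, ((if Z ≤ H then (1 : ℚ) else 0) * (μ H K : ℚ)) * χS K := by
        rw [Finset.sum_comm]
        simp_rw [Finset.sum_mul]
    _ = ∑ H : Subgroup G, (if Z ≤ H then (1 : ℚ) else 0) * F H := by
        refine Finset.sum_congr rfl fun H _ => ?_
        rw [hF' H, Finset.mul_sum]
        simp_rw [mul_assoc]
    _ = ∑ H : Subgroup G, F H / (H.index : ℚ) * (if g ∈ H then (H.index : ℚ) else 0) := by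
        refine Finset.sum_congr rfl fun H _ => ?_
        rw [hterm H]
        split_ifs <;> simp
end

section
/- Let g be a finite-order linear automorphism of a finite-dimensional real vector space V preserving a full-rank lattice, with fixed subspace V_g of dimension δ(g). Then the value det(1 − g restricted to the orthogonal complement of V_g) = lim_{q→1} det(1 − qg)/(1−q)^{δ(g)} is a positive integer. -/
/-!
Because `f` has finite order it is semisimple, so `1` is a root of its characteristic polynomial
of multiplicity exactly `δ`; since `det(1 - q f)` is the reversed characteristic polynomial, this
gives `Q(1) ≠ 0`. For `0 ≤ q < 1` we have `(q f)^m = q^m ≠ 1`, so `det(1 - q f) ≠ 0` and `Q` has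
no zero on `[0, 1]`; as `Q(0) = 1`, the intermediate value theorem gives `Q(1) > 0`. Finally, the
matrix of `f` in a lattice basis is integral, so `det(1 - q f) ∈ ℤ[q]`, and dividing by `(1 - q)^δ`,
a monic polynomial up to sign, keeps the coefficients integral.
-/

open Polynomial

namespace Polynomial

variable {R : Type*} [CommRing R]

theorem eval_one_reverse (p : R[X]) : p.reverse.eval 1 = p.eval 1 := by
  let := invertibleOne (α := R)
  simpa using eval₂_reverse_mul_pow (RingHom.id R) 1 p

theorem reverse_X_sub_one_pow [Nontrivial R] (k : ℕ) :
    ((X - 1 : R[X]) ^ k).reverse = (1 - X) ^ k := by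
  have hmonic : (X - 1 : R[X]).Monic := by simpa using monic_X_sub_C (1 : R)
  have h1 : (1 : R[X]).reverse = 1 := by simpa using reverse_C (1 : R)
  have hX : (X : R[X]).reverse = 1 := by simpa [h1] using reverse_mul_X (1 : R[X])
  induction k with
  | zero => simpa using h1
  | succ k ih =>
    rw [pow_succ, reverse_mul (by simp [(hmonic.pow k).leadingCoeff, hmonic.leadingCoeff]), ih,
      pow_succ]
    congr
    simpa [hX, sub_eq_add_neg] using reverse_add_C (X : R[X]) (-1)

theorem exists_eq_map_of_map_eq_one_sub_X_pow_mul {S : Type*} [CommRing S] [IsDomain S]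
    {φ : R →+* S} (hφ : Function.Injective φ) {p : R[X]} {q : S[X]} {k : ℕ}
    (h : p.map φ = (1 - X) ^ k * q) : ∃ r : R[X], q = r.map φ := by
  have hmonic : ((X - 1 : R[X]) ^ k).Monic := by simpa using (monic_X_sub_C (1 : R)).pow k
  obtain ⟨r, rfl⟩ : (1 - X : R[X]) ^ k ∣ p := by
    refine (pow_dvd_pow_of_dvd ⟨-1, by ring⟩ k).trans ((map_dvd_map φ hφ hmonic).mp ?_)
    rw [h]
    simpa using (pow_dvd_pow_of_dvd ⟨-1, by ring⟩ k).mul_right q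
  refine ⟨r, mul_left_cancel₀ (pow_ne_zero k ?_) (h.symm.trans ?_)⟩
  · exact sub_ne_zero.mpr (by simpa using (X_ne_C (1 : S)).symm)
  · simp

variable {K : Type*} [Field K]

theorem eval_one_ne_zero_of_reverse_eq {p Q : K[X]} (hp : p ≠ 0)
    (h : p.reverse = (1 - X) ^ p.rootMultiplicity 1 * Q) : Q.eval 1 ≠ 0 := by
  obtain ⟨g, hpg, hg⟩ := p.exists_eq_pow_rootMultiplicity_mul_and_not_dvd hp 1
  have hQg : Q = g.reverse := by
    have hne : ((1 : K[X]) - X) ^ p.rootMultiplicity 1 ≠ 0 :=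
      pow_ne_zero _ (sub_ne_zero.mpr (by simpa using (X_ne_C (1 : K)).symm))
    refine mul_left_cancel₀ hne (h.symm.trans ?_)
    conv_lhs => rw [hpg]
    rw [C_1, reverse_mul_of_domain, reverse_X_sub_one_pow]
  rw [hQg, eval_one_reverse]
  exact fun h1 => hg (dvd_iff_isRoot.mpr h1)

end Polynomial

theorem pos_of_continuousOn_Icc_of_ne_zero {α β : Type*} [ConditionallyCompleteLinearOrder α]
    [TopologicalSpace α] [OrderTopology α] [DenselyOrdered α] [LinearOrder β] [Zero β]
    [TopologicalSpace β] [OrderClosedTopology β] {f : α → β} {a b : α} (hab : a ≤ b)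
    (hf : ContinuousOn f (Set.Icc a b)) (ha : 0 < f a) (hne : ∀ x ∈ Set.Icc a b, f x ≠ 0) :
    0 < f b := by
  by_contra! hb
  obtain ⟨c, hc, hc0⟩ := intermediate_value_Icc' hab hf ⟨hb, ha.le⟩
  exact hne c hc hc0

namespace Module.End

variable {K V : Type*} [Field K] [CharZero K] [AddCommGroup V] [Module K V]

theorem isSemisimple_of_pow_eq_one {f : End K V} {m : ℕ} (hm : m ≠ 0) (hf : f ^ m = 1) :
    f.IsSemisimple :=
  isSemisimple_of_squarefree_aeval_eq_zero
    (separable_X_pow_sub_C (1 : K) (Nat.cast_ne_zero.mpr hm) one_ne_zero).squarefree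
    (by simp [hf])

theorem rootMultiplicity_one_charpoly_of_pow_eq_one [FiniteDimensional K V] {f : End K V} {m : ℕ}
    (hm : m ≠ 0) (hf : f ^ m = 1) :
    f.charpoly.rootMultiplicity 1 = Module.finrank K (LinearMap.ker (f - 1)) := by
  rw [← LinearMap.finrank_maxGenEigenspace_eq,
    (isSemisimple_of_pow_eq_one hm hf).isFinitelySemisimple.maxGenEigenspace_eq_eigenspace,
    eigenspace_def, one_smul]

end Module.End

theorem Module.Basis.exists_toMatrix_eq_map_intCast {K V ι : Type*} [Field K] [CharZero K]
    [AddCommGroup V] [Module K V] [Fintype ι] [DecidableEq ι] (b : Module.Basis ι K V)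
    {f : Module.End K V}
    (hf : (Submodule.span ℤ (Set.range b)).map (f.restrictScalars ℤ) ≤
      Submodule.span ℤ (Set.range b)) :
    ∃ N : Matrix ι ι ℤ, LinearMap.toMatrix b b f = N.map (↑) := by
  have hint (i j : ι) : LinearMap.toMatrix b b f i j ∈ Set.range (algebraMap ℤ K) := by
    rw [LinearMap.toMatrix_apply]
    exact (b.mem_span_iff_repr_mem ℤ _).mp
      (hf (Submodule.mem_map_of_mem (Submodule.subset_span (Set.mem_range_self j)))) i
  choose N hN using hint
  exact ⟨Matrix.of N, by ext i j; simp [← hN i j]⟩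

namespace Matrix

variable {n : Type*} [Fintype n] [DecidableEq n]

theorem charpolyRev_map {R S : Type*} [CommRing R] [CommRing S] (φ : R →+* S)
    (M : Matrix n n R) : (M.map φ).charpolyRev = M.charpolyRev.map φ := by
  rw [charpolyRev, charpolyRev, ← coe_mapRingHom, RingHom.map_det]
  congr 1
  ext i j
  by_cases hij : i = j <;> simp [hij]

theorem eval_charpolyRev_eq_det {R : Type*} [CommRing R] (M : Matrix n n R) (t : R) :
    M.charpolyRev.eval t = (1 - t • M).det := by
  rw [charpolyRev, ← coe_evalRingHom, RingHom.map_det]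
  congr 1
  ext i j
  by_cases hij : i = j <;> simp [hij] <;> ring

theorem det_one_sub_smul_ne_zero_of_pow_eq_one {R : Type*} [CommRing R] [IsDomain R]
    {A : Matrix n n R} {m : ℕ} (hA : A ^ m = 1) {t : R} (ht : t ^ m ≠ 1) :
    (1 - t • A).det ≠ 0 := by
  have hdvd : (1 - t • A).det ∣ (1 - t ^ m) ^ Fintype.card n := by
    have h := map_dvd detMonoidHom (one_sub_dvd_one_sub_pow (t • A) m)
    rwa [_root_.smul_pow, hA, smul_one_eq_diagonal, ← diagonal_one, diagonal_sub,
      coe_detMonoidHom, det_diagonal, Finset.prod_const, Finset.card_univ] at h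
  exact fun h0 => pow_ne_zero _ (sub_ne_zero.mpr ht.symm) (zero_dvd_iff.mp (h0 ▸ hdvd))

theorem eval_one_pos_of_charpolyRev_eq {A : Matrix n n ℝ} {m : ℕ} (hm : m ≠ 0) (hA : A ^ m = 1)
    {k : ℕ} {Q : ℝ[X]} (hQ : A.charpolyRev = (1 - X) ^ k * Q) (hQ1 : Q.eval 1 ≠ 0) :
    0 < Q.eval 1 := by
  refine pos_of_continuousOn_Icc_of_ne_zero (f := fun t => Q.eval t) zero_le_one
    Q.continuousOn ?_ ?_
  · have hQ0 : Q.eval 0 = 1 := by simpa using (congr_arg (eval 0) hQ).symm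
    simp [hQ0]
  rintro t ⟨ht0, ht1⟩
  rcases ht1.lt_or_eq with ht1 | rfl
  · intro hQt
    refine det_one_sub_smul_ne_zero_of_pow_eq_one hA (pow_lt_one₀ ht0 ht1 hm).ne ?_
    rw [← eval_charpolyRev_eq_det, hQ, eval_mul, hQt, mul_zero]
  · exact hQ1

end Matrix

theorem det_complement_pos_integer_general
    {V : Type*} [AddCommGroup V] [Module ℝ V]
    (d : ℕ) (b : Module.Basis (Fin d) ℝ V) (f : Module.End ℝ V) (m : ℕ) (hm : 0 < m)
    (hord : orderOf f = m)
    (hL : Submodule.map (LinearMap.restrictScalars ℤ f) (Submodule.span ℤ (Set.range b)) =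
      Submodule.span ℤ (Set.range b))
    (Q : Polynomial ℝ)
    (hQ : (1 - (Polynomial.X : Polynomial ℝ) •
        (LinearMap.toMatrix b b f).map Polynomial.C).det =
      (1 - Polynomial.X) ^ (Module.finrank ℝ (LinearMap.ker (f - 1))) * Q) :
    ∃ k : ℕ, 0 < k ∧ Q.eval 1 = k := by
  have : FiniteDimensional ℝ V := Module.Finite.of_basis b
  have hfm : f ^ m = 1 := hord ▸ pow_orderOf_eq_one f
  change (LinearMap.toMatrix b b f).charpolyRev = _ at hQ
  have hQ1 : Q.eval 1 ≠ 0 := by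
    refine eval_one_ne_zero_of_reverse_eq f.charpoly_monic.ne_zero ?_
    rw [Module.End.rootMultiplicity_one_charpoly_of_pow_eq_one hm.ne' hfm,
      ← LinearMap.charpoly_toMatrix f b, Matrix.reverse_charpoly, hQ]
  have hpos : 0 < Q.eval 1 := Matrix.eval_one_pos_of_charpolyRev_eq hm.ne'
    (by rw [LinearMap.toMatrix_pow, hfm, LinearMap.toMatrix_one]) hQ hQ1
  obtain ⟨N, hN⟩ := b.exists_toMatrix_eq_map_intCast hL.le
  obtain ⟨r, rfl⟩ := exists_eq_map_of_map_eq_one_sub_X_pow_mul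
    (Int.castRingHom ℝ).injective_int (p := N.charpolyRev)
    (by rw [← Matrix.charpolyRev_map, ← hQ, hN]; rfl)
  rw [eval_one_map, eq_intCast] at hpos ⊢
  lift r.eval 1 to ℕ using (by exact_mod_cast hpos.le) with k
  exact ⟨k, by exact_mod_cast hpos, rfl⟩

/-- For a finite-order lattice-preserving endomorphism `f` with fixed space of dimension `δ`,
the value `det_{V_f^⊥}(1 - f) = lim_{q→1} det(1 - q f)/(1-q)^δ`, i.e. the evaluation at `1` of
the polynomial `Q` with `det(1 - q f) = (1-q)^δ Q(q)`, is a positive integer. -/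
theorem det_complement_pos_integer
    {V : Type*} [AddCommGroup V] [Module ℝ V] [FiniteDimensional ℝ V]
    (d : ℕ) (b : Module.Basis (Fin d) ℝ V) (f : Module.End ℝ V) (m : ℕ) (hm : 0 < m)
    (hord : orderOf f = m)
    (hL : Submodule.map (LinearMap.restrictScalars ℤ f) (Submodule.span ℤ (Set.range b)) =
      Submodule.span ℤ (Set.range b))
    (Q : Polynomial ℝ)
    (hQ : (1 - (Polynomial.X : Polynomial ℝ) •
        (LinearMap.toMatrix b b f).map Polynomial.C).det =
      (1 - Polynomial.X) ^ (Module.finrank ℝ (LinearMap.ker (f - 1))) * Q) :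
    ∃ k : ℕ, 0 < k ∧ Q.eval 1 = k :=
  det_complement_pos_integer_general d b f m hm hord hL Q hQ
end
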